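/- arXiv:1107.1522 — 2 statements merged into one kernel-verified Lean document; each statement's English description precedes it below -/
import Mathlib

section
/- There is no divisor class D = a·ẽ₀ − Σᵢ bᵢ·ẽᵢ in a rank-8 lattice with intersection form diag(2,−2,…,−2) (basis ẽ₀,…,ẽ₇) such that D·H = 6 and D² = 4, where H = 3ẽ₀ − Σᵢ₌₁⁷ ẽᵢ, all bᵢ ≥ 0, bᵢ ≤ 3, and D has nonnegative pairing with each of the classes ẽᵢ (1≤i≤7), ẽ₀−ẽᵢ−ẽⱼ (i≠j), 2ẽ₀−ẽ_{i₁}−⋯−ẽ_{i₅}, and 3ẽ₀−Σ_{i≠j}ẽᵢ−2ẽⱼ. -/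
/-! The form is twice the odd unimodular form `diag(1, -1, …, -1)`, for which
`3ẽ₀ - ẽ₁ - ⋯ - ẽ₇` is a characteristic vector: `x² ≡ x · (3ẽ₀ - ∑ ẽᵢ) (mod 2)`, because
`n² ≡ n (mod 2)` coordinatewise. Hence `D²/2 ≡ D·H/2 (mod 2)`, which rules out `D² = 4`,
`D·H = 6`. -/

open Finset

theorem Int.sq_modEq_self_two (x : ℤ) : x ^ 2 ≡ x [ZMOD 2] :=
  (Int.modEq_iff_dvd.mpr <| by
    rw [show x - x ^ 2 = -(x * (x - 1)) by ring]
    exact (Int.even_mul_pred_self x).two_dvd.neg_right)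

theorem sq_sub_sum_sq_modEq_three_mul_sub_sum {ι : Type*} (s : Finset ι) (a : ℤ) (b : ι → ℤ) :
    a ^ 2 - ∑ i ∈ s, b i ^ 2 ≡ 3 * a - ∑ i ∈ s, b i [ZMOD 2] := by
  have ha : a ^ 2 ≡ 3 * a [ZMOD 2] :=
    (Int.sq_modEq_self_two a).trans (Int.modEq_iff_dvd.mpr ⟨a, by ring⟩)
  exact ha.sub (Int.ModEq.sum fun i _ => Int.sq_modEq_self_two (b i))

/-- In the rank-8 lattice `Pic(X_f)` with intersection form `diag(2,−2,…,−2)` in the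
basis `ẽ₀,…,ẽ₇`, write `D = a·ẽ₀ − ∑ bᵢ·ẽᵢ` and `H = 3ẽ₀ − ∑ ẽᵢ`.  Then
`D·H = 6a − 2∑bᵢ`, `D² = 2a² − 2∑bᵢ²`, `D·ẽᵢ = 2bᵢ`,
`D·(ẽ₀−ẽᵢ−ẽⱼ) = 2a−2bᵢ−2bⱼ`, `D·(2ẽ₀−ẽ_{i₁}−⋯−ẽ_{i₅}) = 4a−2∑_{t}b_{i_t}`, and
`D·(3ẽ₀−∑_{i≠j}ẽᵢ−2ẽⱼ) = 6a−2∑_{i≠j}bᵢ−4bⱼ`.  There is no such `D` with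
`D·H = 6`, `D² = 4`, `0 ≤ bᵢ ≤ 3`, and nonnegative pairing with all of the 56
listed classes. -/
theorem stmt1 :
    ¬ ∃ (a : ℤ) (b : Fin 7 → ℤ),
      (6 * a - 2 * ∑ i, b i = 6) ∧
      (2 * a ^ 2 - 2 * ∑ i, (b i) ^ 2 = 4) ∧
      (∀ i, 0 ≤ 2 * b i) ∧
      (∀ i, b i ≤ 3) ∧
      (∀ i j, i ≠ j → 0 ≤ 2 * a - 2 * b i - 2 * b j) ∧
      (∀ S : Finset (Fin 7), S.card = 5 → 0 ≤ 4 * a - 2 * ∑ i ∈ S, b i) ∧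
      (∀ j, 0 ≤ 6 * a - 2 * ∑ i ∈ Finset.univ.erase j, b i - 4 * b j) := by
  rintro ⟨a, b, hDH, hDD, -⟩
  have hcong := sq_sub_sum_sq_modEq_three_mul_sub_sum univ a b
  rw [show a ^ 2 - ∑ i, b i ^ 2 = 2 by omega, show 3 * a - ∑ i, b i = 3 by omega] at hcong
  exact absurd hcong (by decide)
end

section
/- Let X ⊂ P³ be a smooth quartic surface with hyperplane class H, ẽ a conic on X (ẽ·H = 2, ẽ² = −2), and D' an irreducible curve with D'·H = 4 not linearly equivalent to H. If D'·ẽ = 0, then (D' − H)² < 0 by the Hodge index theorem, so D'² ≤ 2 and (ẽ + D')² = D'² + ẽ² ≤ 0, contradicting (ẽ + D')² = 4. -/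
/-- Let `X ⊂ ℙ³` be a smooth quartic K3 surface (even intersection pairing) with
hyperplane class `H` (`H² = 4`), `ẽ` a conic on `X` (`ẽ·H = 2`, `ẽ² = −2`), and
`D'` an irreducible curve with `D'·H = 4` not linearly equivalent to `H`.  Assume
the Hodge index theorem: any nonzero class orthogonal to `H` has negative square.
If `D'·ẽ = 0` and `(ẽ + D')² = 4`, then `(D' − H)² < 0`, so `D'² ≤ 2` by evenness
and `(ẽ + D')² = D'² + ẽ² ≤ 0` — a contradiction. -/
theorem stmt18 (Pic : Type*) [AddCommGroup Pic]
    (inter : Pic → Pic → ℤ)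
    (hadd : ∀ a b c : Pic, inter (a + b) c = inter a c + inter b c)
    (hsymm : ∀ a b : Pic, inter a b = inter b a)
    (heven : ∀ a : Pic, Even (inter a a))
    (H e D' : Pic)
    (hH : inter H H = 4)
    (heH : inter e H = 2) (hee : inter e e = -2)
    (hD'H : inter D' H = 4) (hD'ne : D' ≠ H)
    (hHodge : ∀ M : Pic, M ≠ 0 → inter M H = 0 → inter M M < 0)
    (hD'e : inter D' e = 0)
    (hsum : inter (e + D') (e + D') = 4) : False := by
  have hzero : ∀ c : Pic, inter 0 c = 0 := by
    intro c
    have h := hadd 0 0 c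
    rw [add_zero] at h
    linarith
  have hneg : ∀ a c : Pic, inter (-a) c = - inter a c := by
    intro a c
    have h := hadd a (-a) c
    rw [add_neg_cancel] at h
    rw [hzero c] at h
    linarith
  have hsub : ∀ a b c : Pic, inter (a - b) c = inter a c - inter b c := by
    intro a b c
    rw [sub_eq_add_neg, hadd, hneg]
    ring
  -- expand hsum
  have h1 : inter (e + D') e = inter e e + inter D' e := hadd e D' e
  have h2 : inter (e + D') D' = inter e D' + inter D' D' := hadd e D' D'
  have h3 : inter (e + D') (e + D') = inter (e + D') e + inter (e + D') D' := by
    rw [hsymm (e + D') (e + D'), hadd e D' (e + D'), hsymm e (e + D'), hsymm D' (e + D')]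
  have heD' : inter e D' = 0 := by rw [hsymm]; exact hD'e
  have hDD : inter D' D' = 6 := by
    rw [h3, h1, h2, hee, hD'e, heD'] at hsum
    linarith
  -- Hodge index on M = D' - H
  set M := D' - H with hM
  have hMne : M ≠ 0 := sub_ne_zero.mpr hD'ne
  have hMH : inter M H = 0 := by rw [hM, hsub, hD'H, hH]; ring
  have hMM : inter M M = 2 := by
    rw [hM, hsub, hsymm D' (D' - H), hsymm H (D' - H), hsub, hsub,
      hDD, hH, hsymm H D', hD'H]
    ring
  have := hHodge M hMne hMH
  omega
end
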